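/- arXiv:1204.1147 — 2 statements merged into one kernel-verified Lean document; each statement's English description precedes it below -/
import Mathlib

section
/- Let f : (X → ℝ) ⇀ (X → ℝ) be monotone and order-concave, let ρ be in the domain of f, and let X₁ ⊎ X₂ = X be a partition such that X₁ →^{f,ρ} X₂ (locally at ρ, the X₁-components of f do not depend on decreasing the X₂-coordinates). Then for every ρ' : X₂ → ℝ with ρ' ≥ ρ|_{X₂} and ρ ⊕ ρ' ∈ dom(f), we have (f(ρ ⊕ ρ'))|_{X₁} = (f(ρ))|_{X₁}. -/
/-!
Put `a = ρ ⊕ ρ''` and `b = ρ ⊕ ρ'`, so `a ≤ ρ ≤ b` with `a` strictly below `ρ` on `X₂` and `b = ρ`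
off `X₂`. Since `X` is finite, a small step `c = t • b + (1 - t) • a` from `a` towards `b` still
satisfies `c ≤ ρ`. Concavity and monotonicity give `t • f b + (1 - t) • f a ≤ f c ≤ f ρ`; on `X₁`
we have `f a = f ρ`, hence `f b ≤ f ρ` there, and monotonicity gives the reverse inequality.
-/

open Classical in
/-- Override `ρ` on the set `S` by `ρ'` (the operator `ρ ⊕ ρ'|_S`). -/
noncomputable def ovr {X : Type*} (S : Set X) (ρ ρ' : X → ℝ) : X → ℝ :=
  fun x => if x ∈ S then ρ' x else ρ x

def OrderConvexSet {X : Type*} (S : Set (X → ℝ)) : Prop :=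
  ∀ x ∈ S, ∀ y ∈ S, (x ≤ y ∨ y ≤ x) → ∀ t : ℝ, 0 ≤ t → t ≤ 1 →
    t • x + (1 - t) • y ∈ S

def OrderConcaveFnOn {X : Type*} (f : (X → ℝ) → (X → ℝ)) (D : Set (X → ℝ)) : Prop :=
  OrderConvexSet D ∧
  ∀ x ∈ D, ∀ y ∈ D, (x ≤ y ∨ y ≤ x) → ∀ t : ℝ, 0 ≤ t → t ≤ 1 →
    t • f x + (1 - t) • f y ≤ f (t • x + (1 - t) • y)

open Filter Topology

section ovr

variable {X : Type*} {S : Set X} {ρ ρ' : X → ℝ}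

lemma ovr_apply_of_mem {x : X} (hx : x ∈ S) : ovr S ρ ρ' x = ρ' x := if_pos hx

lemma ovr_apply_of_notMem {x : X} (hx : x ∉ S) : ovr S ρ ρ' x = ρ x := if_neg hx

lemma ovr_empty : ovr (∅ : Set X) ρ ρ' = ρ :=
  funext fun _ => ovr_apply_of_notMem (Set.notMem_empty _)

lemma ovr_le_self (h : ∀ x ∈ S, ρ' x ≤ ρ x) : ovr S ρ ρ' ≤ ρ := fun x => by
  by_cases hx : x ∈ S
  · simpa only [ovr_apply_of_mem hx] using h x hx
  · rw [ovr_apply_of_notMem hx]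

lemma self_le_ovr (h : ∀ x ∈ S, ρ x ≤ ρ' x) : ρ ≤ ovr S ρ ρ' := fun x => by
  by_cases hx : x ∈ S
  · simpa only [ovr_apply_of_mem hx] using h x hx
  · rw [ovr_apply_of_notMem hx]

end ovr

lemma exists_pos_convexComb_le {ι : Type*} [Finite ι] {a b ρ : ι → ℝ} (haρ : a ≤ ρ)
    (hmix : ∀ i, a i < ρ i ∨ b i ≤ ρ i) :
    ∃ t : ℝ, 0 < t ∧ t ≤ 1 ∧ t • b + (1 - t) • a ≤ ρ := by
  have hcoord : ∀ i, ∀ᶠ t in 𝓝[>] (0 : ℝ), t * b i + (1 - t) * a i ≤ ρ i := by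
    intro i
    rcases hmix i with hlt | hle
    · have hcont : Continuous fun t : ℝ => t * b i + (1 - t) * a i := by fun_prop
      have hlim : Tendsto (fun t : ℝ => t * b i + (1 - t) * a i) (𝓝 0) (𝓝 (a i)) := by
        simpa using hcont.tendsto 0
      exact nhdsWithin_le_nhds ((hlim.eventually (gt_mem_nhds hlt)).mono fun _ h => h.le)
    · filter_upwards [Ioo_mem_nhdsGT zero_lt_one] with t ⟨ht0, ht1⟩
      nlinarith [haρ i]
  obtain ⟨t, hc, ht0, ht1⟩ :=
    ((eventually_all.2 hcoord).and (Ioc_mem_nhdsGT zero_lt_one)).exists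
  exact ⟨t, ht0, ht1, fun i => by simpa using hc i⟩

lemma apply_eq_of_apply_eq_of_le {X : Type*} [Finite X] {f : (X → ℝ) → (X → ℝ)}
    {D : Set (X → ℝ)} (hmono : ∀ a ∈ D, ∀ b ∈ D, a ≤ b → f a ≤ f b)
    (hconc : OrderConcaveFnOn f D) {a ρ b : X → ℝ} (ha : a ∈ D) (hρ : ρ ∈ D) (hb : b ∈ D)
    (haρ : a ≤ ρ) (hρb : ρ ≤ b) (hmix : ∀ y, a y < ρ y ∨ b y ≤ ρ y) {x : X}
    (hx : f a x = f ρ x) : f b x = f ρ x := by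
  obtain ⟨t, ht0, ht1, hc⟩ := exists_pos_convexComb_le haρ hmix
  have hcomp : b ≤ a ∨ a ≤ b := Or.inr (haρ.trans hρb)
  have hcD := hconc.1 b hb a ha hcomp t ht0.le ht1
  have hconcx : t * f b x + (1 - t) * f a x ≤ f (t • b + (1 - t) • a) x := by
    simpa using hconc.2 b hb a ha hcomp t ht0.le ht1 x
  have hcx := hmono _ hcD ρ hρ hc x
  have hρbx := hmono ρ hρ b hb hρb x
  refine le_antisymm ?_ hρbx
  nlinarith

theorem independent_upward_general {X : Type*} [Fintype X]
    (f : (X → ℝ) → (X → ℝ)) (D : Set (X → ℝ))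
    (hmono : ∀ a ∈ D, ∀ b ∈ D, a ≤ b → f a ≤ f b)
    (hconc : OrderConcaveFnOn f D)
    (ρ : X → ℝ) (hρ : ρ ∈ D)
    (X₁ X₂ : Set X)
    (harrow : X₁ = ∅ ∨ X₂ = ∅ ∨
      ∃ ρ'' : X → ℝ, ovr X₂ ρ ρ'' ∈ D ∧ (∀ x ∈ X₂, ρ'' x < ρ x) ∧
        ∀ x ∈ X₁, f (ovr X₂ ρ ρ'') x = f ρ x) :
    ∀ ρ' : X → ℝ, (∀ x ∈ X₂, ρ x ≤ ρ' x) → ovr X₂ ρ ρ' ∈ D →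
      ∀ x ∈ X₁, f (ovr X₂ ρ ρ') x = f ρ x := by
  intro ρ' hge hb x hx
  rcases harrow with rfl | rfl | ⟨ρ'', ha, hlt, heq⟩
  · exact absurd hx (Set.notMem_empty x)
  · rw [ovr_empty]
  have hmix : ∀ y, ovr X₂ ρ ρ'' y < ρ y ∨ ovr X₂ ρ ρ' y ≤ ρ y := fun y => by
    by_cases hy : y ∈ X₂
    · exact Or.inl ((ovr_apply_of_mem hy).trans_lt (hlt y hy))
    · exact Or.inr (ovr_apply_of_notMem hy).le
  exact apply_eq_of_apply_eq_of_le hmono hconc ha hρ hb (ovr_le_self fun y hy => (hlt y hy).le)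
    (self_le_ovr hge) hmix (heq x hx)

/-- If `f` is monotone and order-concave, `ρ ∈ dom f`, and the
partition `X₁ ⊎ X₂ = X` satisfies `X₁ →^{f,ρ} X₂`, then increasing the
`X₂`-coordinates does not change the `X₁`-components of `f` at `ρ`. -/
theorem independent_upward {X : Type*} [Fintype X]
    (f : (X → ℝ) → (X → ℝ)) (D : Set (X → ℝ))
    (hmono : ∀ a ∈ D, ∀ b ∈ D, a ≤ b → f a ≤ f b)
    (hconc : OrderConcaveFnOn f D)
    (ρ : X → ℝ) (hρ : ρ ∈ D)
    (X₁ X₂ : Set X) (hdisj : Disjoint X₁ X₂) (hcover : X₁ ∪ X₂ = Set.univ)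
    (harrow : X₁ = ∅ ∨ X₂ = ∅ ∨
      ∃ ρ'' : X → ℝ, ovr X₂ ρ ρ'' ∈ D ∧ (∀ x ∈ X₂, ρ'' x < ρ x) ∧
        ∀ x ∈ X₁, f (ovr X₂ ρ ρ'') x = f ρ x) :
    ∀ ρ' : X → ℝ, (∀ x ∈ X₂, ρ x ≤ ρ' x) → ovr X₂ ρ ρ' ∈ D →
      ∀ x ∈ X₁, f (ovr X₂ ρ ρ') x = f ρ x :=
  independent_upward_general f D hmono hconc ρ hρ X₁ X₂ harrow
end

section
/- Let f : (X → ℝ) ⇀ (X → ℝ) be monotone and order-concave with upward closed domain, and let ρ* be a feasible fixpoint of f. Then ρ* is the greatest pre-fixpoint of f: every ρ' ∈ dom(f) with ρ' ≤ f(ρ') satisfies ρ' ≤ ρ*. -/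
/-- The dependency relation `A →^{f,ρ} B`: `A = ∅`, or `B = ∅`, or one can
strictly decrease `ρ` on `B` (staying in the domain `D`) without changing the
`A`-components of `f`. -/
def Arrow {X : Type*} (f : (X → ℝ) → (X → ℝ)) (D : Set (X → ℝ))
    (ρ : X → ℝ) (A B : Set X) : Prop :=
  A = ∅ ∨ B = ∅ ∨
    ∃ ρ' : X → ℝ, ovr B ρ ρ' ∈ D ∧ (∀ x ∈ B, ρ' x < ρ x) ∧
      ∀ x ∈ A, f (ovr B ρ ρ') x = f ρ x

/-- Feasibility of a fixpoint `ρ*` of the partial function `f` with domain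
`D`: there is a partition `P 0 ⊎ … ⊎ P (k-1) = X` ordered by the dependency
relation such that for each block `P j` there is a pre-fixpoint `σ₀` of
`f ← ρ*|_{X∖P j}` with `σ₀ ≪ ρ*` on `P j` whose least fixpoint above `σ₀` is
`ρ*|_{P j}`. -/
def FeasibleFixpoint {X : Type*} (f : (X → ℝ) → (X → ℝ)) (D : Set (X → ℝ))
    (ρs : X → ℝ) : Prop :=
  ∃ (k : ℕ) (P : Fin k → Set X),
    (∀ i j : Fin k, i ≠ j → Disjoint (P i) (P j)) ∧
    (⋃ i, P i) = Set.univ ∧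
    (∀ j : Fin k, Arrow f D ρs (⋃ i ∈ {i : Fin k | i ≤ j}, P i)
      (⋃ i ∈ {i : Fin k | j < i}, P i)) ∧
    (∀ j : Fin k, ∃ σ₀ : X → ℝ, σ₀ ∈ D ∧
      (∀ x, x ∉ P j → σ₀ x = ρs x) ∧
      (∀ x ∈ P j, σ₀ x < ρs x) ∧
      (∀ x ∈ P j, σ₀ x ≤ f σ₀ x) ∧
      (∀ τ : X → ℝ, τ ∈ D → (∀ x, x ∉ P j → τ x = ρs x) →
        (∀ x ∈ P j, f τ x = τ x) → σ₀ ≤ τ → ρs ≤ τ))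


/-!
Let `ρ'` be a pre-fixpoint and put `ρ = ρ' ⊔ ρ*`, again a pre-fixpoint. We show `ρ = ρ*` block by
block. If `ρ > ρ*` somewhere on `Xⱼ` while `ρ = ρ*` on the earlier blocks, the arrow
`X₁ ⊎ … ⊎ Xⱼ → Xⱼ₊₁ ⊎ … ⊎ X_k` lets us lower the later blocks to `ρ*` and, by concavity, obtain a
pre-fixpoint `v ≥ ρ*` that equals `ρ*` off `Xⱼ` and exceeds it on `Xⱼ`. Extrapolating beyond `ρ*`
along the segment from `v` gives, again by concavity, a post-fixpoint of `f ← ρ*|_{X∖Xⱼ}` strictly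
below `ρ*` on `Xⱼ` but above the pre-fixpoint of the feasibility witness. Knaster–Tarski yields a
fixpoint between the two, contradicting the minimality of `ρ*|_{Xⱼ}`.
-/

open Filter Function Set

section Override

variable {X : Type*} {S : Set X} {ρ ρ' : X → ℝ} {x : X}

lemma ovr_of_mem (h : x ∈ S) : ovr S ρ ρ' x = ρ' x := if_pos h

lemma ovr_of_notMem (h : x ∉ S) : ovr S ρ ρ' x = ρ x := if_neg h

end Override

theorem exists_pos_le_one_forall_mul_le {X : Type*} {S : Set X} (hS : S.Finite) {a b : X → ℝ}
    (ha : ∀ x ∈ S, 0 < a x) : ∃ c : ℝ, 0 < c ∧ c ≤ 1 ∧ ∀ x ∈ S, c * b x ≤ a x := by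
  have hsmall : ∀ x ∈ S, ∀ᶠ c in nhds (0 : ℝ), c * b x ≤ a x := fun x hx =>
    ((continuous_id.mul continuous_const).tendsto' 0 0 (zero_mul _)).eventually
      (eventually_le_nhds (ha x hx))
  obtain ⟨c, hc, hc1, hcS⟩ :=
    ((eventually_le_nhds one_pos).and ((eventually_all_finite hS).2 hsmall)).exists_gt
  exact ⟨c, hc, hc1, hcS⟩

namespace OrderConcaveFnOn

variable {X : Type*} {f : (X → ℝ) → (X → ℝ)} {D : Set (X → ℝ)}

theorem apply_combo_ge (hconc : OrderConcaveFnOn f D) {v w : X → ℝ} (hv : v ∈ D) (hw : w ∈ D)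
    (hvw : v ≤ w ∨ w ≤ v) {t : ℝ} (ht0 : 0 ≤ t) (ht1 : t ≤ 1) (x : X) :
    t * f v x + (1 - t) * f w x ≤ f (t • v + (1 - t) • w) x := by
  simpa using hconc.2 v hv w hw hvw t ht0 ht1 x

theorem le_apply_combo_of_le_apply (hconc : OrderConcaveFnOn f D) {v w : X → ℝ} (hv : v ∈ D)
    (hw : w ∈ D) (hvw : v ≤ w ∨ w ≤ v) {t : ℝ} (ht0 : 0 ≤ t) (ht1 : t ≤ 1) {x : X}
    (hvx : v x ≤ f v x) (hwx : w x ≤ f w x) :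
    (t • v + (1 - t) • w) x ≤ f (t • v + (1 - t) • w) x := by
  have := hconc.apply_combo_ge hv hw hvw ht0 ht1 x
  simp only [Pi.add_apply, Pi.smul_apply, smul_eq_mul]
  nlinarith [mul_le_mul_of_nonneg_left hvx ht0, mul_le_mul_of_nonneg_left hwx (sub_nonneg.2 ht1)]

theorem apply_le_of_apply_combo_le (hconc : OrderConcaveFnOn f D) {v w : X → ℝ} (hv : v ∈ D)
    (hw : w ∈ D) (hvw : v ≤ w ∨ w ≤ v) {t : ℝ} (ht0 : 0 ≤ t) (ht1 : t < 1) {x : X}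
    (hvx : v x ≤ f v x) (hux : f (t • v + (1 - t) • w) x ≤ (t • v + (1 - t) • w) x) :
    f w x ≤ w x := by
  have := hconc.apply_combo_ge hv hw hvw ht0 ht1.le x
  simp only [Pi.add_apply, Pi.smul_apply, smul_eq_mul] at hux
  have h : (1 - t) * f w x ≤ (1 - t) * w x := by
    nlinarith [mul_le_mul_of_nonneg_left hvx ht0]
  exact le_of_mul_le_mul_left h (sub_pos.2 ht1)

end OrderConcaveFnOn

section Fixpoints

variable {X : Type*} {f : (X → ℝ) → (X → ℝ)} {D : Set (X → ℝ)}

theorem exists_fixedOn_mem_Icc (hDup : ∀ a ∈ D, ∀ b, a ≤ b → b ∈ D)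
    (hmono : ∀ a ∈ D, ∀ b ∈ D, a ≤ b → f a ≤ f b) {S : Set X} {σ τ : X → ℝ} (hσD : σ ∈ D)
    (hστ : σ ≤ τ) (hσ : ∀ x ∈ S, σ x ≤ f σ x) (hτ : ∀ x ∈ S, f τ x ≤ τ x) :
    ∃ ω ∈ Icc σ τ, ∀ x ∈ S, f ω x = ω x := by
  have : Fact (σ ≤ τ) := ⟨hστ⟩
  have hD : ∀ ω ∈ Icc σ τ, ω ∈ D := fun ω hω => hDup σ hσD ω hω.1
  have hmem : ∀ ω ∈ Icc σ τ, ovr S ω (f ω) ∈ Icc σ τ := by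
    intro ω hω
    constructor <;> intro x <;> by_cases hx : x ∈ S <;>
      simp only [ovr_of_mem, ovr_of_notMem, hx, not_false_eq_true]
    · exact (hσ x hx).trans (hmono σ hσD ω (hD ω hω) hω.1 x)
    · exact hω.1 x
    · exact (hmono ω (hD ω hω) τ (hD τ ⟨hστ, le_rfl⟩) hω.2 x).trans (hτ x hx)
    · exact hω.2 x
  let g : Icc σ τ →o Icc σ τ :=
    { toFun := fun ω => ⟨ovr S ω (f ω), hmem ω ω.2⟩
      monotone' := fun ω₁ ω₂ h x => by
        by_cases hx : x ∈ S
        · simpa only [ovr_of_mem hx] using hmono ω₁ (hD ω₁ ω₁.2) ω₂ (hD ω₂ ω₂.2) h x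
        · simpa only [ovr_of_notMem hx] using h x }
  refine ⟨(OrderHom.lfp g).1, (OrderHom.lfp g).2, fun x hx => ?_⟩
  have hfix : ovr S (OrderHom.lfp g).1 (f (OrderHom.lfp g).1) x = (OrderHom.lfp g).1 x :=
    congrFun (congrArg Subtype.val g.map_lfp) x
  rwa [ovr_of_mem hx] at hfix

theorem le_of_postfixpointOn (hDup : ∀ a ∈ D, ∀ b, a ≤ b → b ∈ D)
    (hmono : ∀ a ∈ D, ∀ b ∈ D, a ≤ b → f a ≤ f b) {S : Set X} {σ ρs τ : X → ℝ} (hσD : σ ∈ D)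
    (hσoff : ∀ x, x ∉ S → σ x = ρs x) (hσ : ∀ x ∈ S, σ x ≤ f σ x)
    (hleast : ∀ ω : X → ℝ, ω ∈ D → (∀ x, x ∉ S → ω x = ρs x) →
      (∀ x ∈ S, f ω x = ω x) → σ ≤ ω → ρs ≤ ω)
    (hστ : σ ≤ τ) (hτoff : ∀ x, x ∉ S → τ x = ρs x) (hτ : ∀ x ∈ S, f τ x ≤ τ x) : ρs ≤ τ := by
  obtain ⟨ω, hω, hωfix⟩ := exists_fixedOn_mem_Icc hDup hmono hσD hστ hσ hτ
  have hωoff : ∀ x, x ∉ S → ω x = ρs x := fun x hx =>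
    le_antisymm ((hω.2 x).trans_eq (hτoff x hx)) ((hσoff x hx).symm.trans_le (hω.1 x))
  exact (hleast ω (hDup σ hσD ω hω.1) hωoff hωfix hω.1).trans hω.2

/-- The block condition in `FeasibleFixpoint`. -/
def IsFeasibleBlock (f : (X → ℝ) → (X → ℝ)) (D : Set (X → ℝ)) (ρs : X → ℝ) (S : Set X) : Prop :=
  ∃ σ₀ : X → ℝ, σ₀ ∈ D ∧
    (∀ x, x ∉ S → σ₀ x = ρs x) ∧
    (∀ x ∈ S, σ₀ x < ρs x) ∧
    (∀ x ∈ S, σ₀ x ≤ f σ₀ x) ∧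
    (∀ τ : X → ℝ, τ ∈ D → (∀ x, x ∉ S → τ x = ρs x) →
      (∀ x ∈ S, f τ x = τ x) → σ₀ ≤ τ → ρs ≤ τ)

theorem IsFeasibleBlock.le_of_prefixpointOn {ρs v : X → ℝ} {S : Set X}
    (hS : IsFeasibleBlock f D ρs S) (hfin : S.Finite) (hDup : ∀ a ∈ D, ∀ b, a ≤ b → b ∈ D)
    (hmono : ∀ a ∈ D, ∀ b ∈ D, a ≤ b → f a ≤ f b) (hconc : OrderConcaveFnOn f D)
    (hρs : ∀ x ∈ S, f ρs x ≤ ρs x) (hvD : v ∈ D) (hρsv : ρs ≤ v)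
    (hvoff : ∀ x, x ∉ S → v x = ρs x) (hv : ∀ x ∈ S, v x ≤ f v x) : v ≤ ρs := by
  obtain ⟨σ, hσD, hσoff, hσlt, hσ, hleast⟩ := hS
  obtain ⟨s, hs, -, hsS⟩ := exists_pos_le_one_forall_mul_le hfin (a := ρs - σ) (b := v - ρs)
    fun x hx => sub_pos.2 (hσlt x hx)
  simp only [Pi.sub_apply] at hsS
  -- reflect `v` through `ρs`, scaled down enough to stay above `σ`
  set τ := ρs - s • (v - ρs)
  have hτ_apply : ∀ x, τ x = ρs x - s * (v x - ρs x) := fun x => rfl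
  have hστ : σ ≤ τ := fun x => by
    by_cases hx : x ∈ S
    · linarith [hsS x hx, hτ_apply x]
    · simp [hτ_apply, hσoff x hx, hvoff x hx]
  have hτD : τ ∈ D := hDup σ hσD τ hστ
  have hτv : τ ≤ v := fun x => by
    nlinarith [hτ_apply x, hρsv x, mul_nonneg hs.le (sub_nonneg.2 (hρsv x))]
  have hρs_combo : (s / (1 + s)) • v + (1 - s / (1 + s)) • τ = ρs := by
    funext x
    simp only [Pi.add_apply, Pi.smul_apply, smul_eq_mul, hτ_apply]
    field_simp
    ring
  have hτ_post : ∀ x ∈ S, f τ x ≤ τ x := fun x hx =>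
    hconc.apply_le_of_apply_combo_le (t := s / (1 + s)) hvD hτD (Or.inr hτv) (by positivity)
      ((div_lt_one (by positivity)).2 (by linarith)) (hv x hx) (by rw [hρs_combo]; exact hρs x hx)
  have hτoff : ∀ x, x ∉ S → τ x = ρs x := fun x hx => by simp [hτ_apply, hvoff x hx]
  have hρsτ := le_of_postfixpointOn hDup hmono hσD hσoff hσ hleast hστ hτoff hτ_post
  intro x
  nlinarith [hρsτ x, hτ_apply x]

theorem Arrow.exists_pos_prefixpointOn (hDup : ∀ a ∈ D, ∀ b, a ≤ b → b ∈ D)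
    (hmono : ∀ a ∈ D, ∀ b ∈ D, a ≤ b → f a ≤ f b) (hconc : OrderConcaveFnOn f D)
    {ρs ρ : X → ℝ} {A B : Set X} (harr : Arrow f D ρs A B) (hB : B.Finite) (hAB : Disjoint A B)
    (hfix : ∀ x ∈ A, f ρs x = ρs x) (hρD : ρ ∈ D) (hρsρ : ρs ≤ ρ) (hρ : ∀ x ∈ A, ρ x ≤ f ρ x) :
    ∃ c : ℝ, 0 < c ∧ ∀ x ∈ A,
      ovr B (ρs + c • (ρ - ρs)) ρs x ≤ f (ovr B (ρs + c • (ρ - ρs)) ρs) x := by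
  rcases harr with rfl | rfl | ⟨w, hqD, hwlt, hwf⟩
  · exact ⟨1, one_pos, fun x hx => hx.elim⟩
  · have hv : ovr ∅ (ρs + (1 : ℝ) • (ρ - ρs)) ρs = ρ := by
      funext x
      simp [ovr_of_notMem (notMem_empty x)]
    exact ⟨1, one_pos, by simpa only [hv] using hρ⟩
  set q := ovr B ρs w
  obtain ⟨c, hc, hc1, hcB⟩ := exists_pos_le_one_forall_mul_le hB (a := ρs - w) (b := ρ - w)
    fun x hx => sub_pos.2 (hwlt x hx)
  simp only [Pi.sub_apply] at hcB
  have hq_in : ∀ x ∈ B, q x = w x := fun x hx => ovr_of_mem hx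
  have hq_out : ∀ x, x ∉ B → q x = ρs x := fun x hx => ovr_of_notMem hx
  have hqρ : q ≤ ρ := fun x => by
    by_cases hx : x ∈ B
    · linarith [hq_in x hx, hwlt x hx, hρsρ x]
    · exact (hq_out x hx).trans_le (hρsρ x)
  have hq : ∀ x ∈ A, q x ≤ f q x := fun x hx => by
    rw [hwf x hx, hfix x hx, hq_out x (hAB.notMem_of_mem_left hx)]
  -- move from `q` a little towards `ρ`, then raise the `B`-coordinates back to `ρs`
  set u := (1 - c) • q + (1 - (1 - c)) • ρ with hu
  have hu_apply : ∀ x, u x = (1 - c) * q x + c * ρ x := fun x => by simp [hu]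
  have huD : u ∈ D := hconc.1 q hqD ρ hρD (Or.inl hqρ) (1 - c) (by linarith) (by linarith)
  set v := ovr B (ρs + c • (ρ - ρs)) ρs
  have hvu : ∀ x, x ∉ B → v x = u x := fun x hx => by
    simp only [v, ovr_of_notMem hx, hu_apply, hq_out x hx, Pi.add_apply, Pi.smul_apply,
      Pi.sub_apply, smul_eq_mul]
    ring
  have huv : u ≤ v := fun x => by
    by_cases hx : x ∈ B
    · rw [show v x = ρs x from ovr_of_mem hx, hu_apply, hq_in x hx]; linarith [hcB x hx]
    · exact (hvu x hx).ge
  refine ⟨c, hc, fun x hx => ?_⟩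
  calc v x = u x := hvu x (hAB.notMem_of_mem_left hx)
    _ ≤ f u x := hconc.le_apply_combo_of_le_apply hqD hρD (Or.inl hqρ) (by linarith)
        (by linarith) (hq x hx) (hρ x hx)
    _ ≤ f v x := hmono u huD v (hDup u huD v huv) huv x

end Fixpoints

section Partition

variable {X ι : Type*} [LinearOrder ι] (P : ι → Set X) (j : ι)

theorem biUnion_le_union_biUnion_gt :
    (⋃ i ∈ {i | i ≤ j}, P i) ∪ (⋃ i ∈ {i | j < i}, P i) = ⋃ i, P i := by
  ext x
  simp only [mem_union, mem_iUnion, mem_ofPred_eq, exists_prop]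
  constructor
  · rintro (⟨i, -, hx⟩ | ⟨i, -, hx⟩) <;> exact ⟨i, hx⟩
  · rintro ⟨i, hx⟩
    exact (le_or_gt i j).imp (fun h => ⟨i, h, hx⟩) (fun h => ⟨i, h, hx⟩)

variable {P} in
theorem disjoint_biUnion_le_biUnion_gt (hP : Pairwise (Disjoint on P)) :
    Disjoint (⋃ i ∈ {i | i ≤ j}, P i) (⋃ i ∈ {i | j < i}, P i) := by
  simp only [disjoint_iUnion_left, disjoint_iUnion_right, mem_ofPred_eq]
  exact fun i hi i' hi' => hP (lt_of_le_of_lt hi' hi).ne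

end Partition

theorem IsFeasibleBlock.le_of_prefixpoint {X : Type*} [Finite X] {f : (X → ℝ) → (X → ℝ)}
    {D : Set (X → ℝ)} {ρs ρ : X → ℝ} {A B S : Set X} (hS : IsFeasibleBlock f D ρs S)
    (hDup : ∀ a ∈ D, ∀ b, a ≤ b → b ∈ D) (hmono : ∀ a ∈ D, ∀ b ∈ D, a ≤ b → f a ≤ f b)
    (hconc : OrderConcaveFnOn f D) (hρsD : ρs ∈ D) (hfix : f ρs = ρs) (hρD : ρ ∈ D)
    (hρsρ : ρs ≤ ρ) (hρ : ρ ≤ f ρ) (harr : Arrow f D ρs A B) (hSA : S ⊆ A) (hAB : Disjoint A B)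
    (hcover : A ∪ B = univ) (hρA : ∀ x ∈ A, x ∉ S → ρ x = ρs x) : ∀ x ∈ S, ρ x ≤ ρs x := by
  obtain ⟨c, hc, hv⟩ := harr.exists_pos_prefixpointOn hDup hmono hconc (toFinite B) hAB
    (fun x _ => congrFun hfix x) hρD hρsρ (fun x _ => hρ x)
  set v := ovr B (ρs + c • (ρ - ρs)) ρs
  have hv_out : ∀ x, x ∉ B → v x = ρs x + c * (ρ x - ρs x) := fun x hx => by
    simp [v, ovr_of_notMem hx]
  have hρsv : ρs ≤ v := fun x => by
    by_cases hx : x ∈ B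
    · exact (ovr_of_mem hx).ge
    · nlinarith [hv_out x hx, hρsρ x]
  have hvoff : ∀ x, x ∉ S → v x = ρs x := fun x hx => by
    by_cases hxB : x ∈ B
    · exact ovr_of_mem hxB
    · have hxA : x ∈ A := ((hcover ▸ mem_univ x : x ∈ A ∪ B)).resolve_right hxB
      rw [hv_out x hxB, hρA x hxA hx, sub_self, mul_zero, add_zero]
  have hvρs := hS.le_of_prefixpointOn (toFinite S) hDup hmono hconc
    (fun x _ => (congrFun hfix x).le) (hDup ρs hρsD v hρsv) hρsv hvoff fun x hx => hv x (hSA hx)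
  intro x hx
  nlinarith [hvρs x, hv_out x (hAB.notMem_of_mem_left (hSA hx))]

/-- A feasible fixpoint of a monotone and order-concave partial
function with upward closed domain is its greatest pre-fixpoint. -/
theorem feasible_fixpoint_greatest_prefixpoint {X : Type*} [Fintype X]
    (f : (X → ℝ) → (X → ℝ)) (D : Set (X → ℝ))
    (hDup : ∀ a ∈ D, ∀ b, a ≤ b → b ∈ D)
    (hmono : ∀ a ∈ D, ∀ b ∈ D, a ≤ b → f a ≤ f b)
    (hconc : OrderConcaveFnOn f D)
    (ρs : X → ℝ) (hρs : ρs ∈ D) (hfix : f ρs = ρs)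
    (hfeas : FeasibleFixpoint f D ρs) :
    ∀ ρ' ∈ D, ρ' ≤ f ρ' → ρ' ≤ ρs := by
  intro ρ' hρ'D hρ'
  obtain ⟨k, P, hdisj, hcover, harrow, hblock⟩ := hfeas
  have hρD : ρ' ⊔ ρs ∈ D := hDup ρs hρs _ le_sup_right
  have hρ : ρ' ⊔ ρs ≤ f (ρ' ⊔ ρs) :=
    sup_le (hρ'.trans (hmono ρ' hρ'D _ hρD le_sup_left))
      (hfix.symm.trans_le (hmono ρs hρs _ hρD le_sup_right))
  have hblocks : ∀ j, ∀ x ∈ P j, (ρ' ⊔ ρs) x ≤ ρs x := by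
    intro j
    induction j using WellFoundedLT.induction with
    | _ j ih =>
      refine IsFeasibleBlock.le_of_prefixpoint (hblock j) hDup hmono hconc hρs hfix hρD
        le_sup_right hρ (harrow j) (subset_biUnion_of_mem (le_refl j))
        (disjoint_biUnion_le_biUnion_gt j fun i i' => hdisj i i')
        ((biUnion_le_union_biUnion_gt P j).trans hcover) fun x hxA hxj => ?_
      obtain ⟨i, hij, hxi⟩ : ∃ i ≤ j, x ∈ P i := by simpa using hxA
      exact (ih i (hij.lt_of_ne (by rintro rfl; exact hxj hxi)) x hxi).antisymm
        (le_sup_right (a := ρ') x)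
  intro x
  obtain ⟨j, hxj⟩ := mem_iUnion.1 (hcover.symm ▸ mem_univ x)
  exact (le_sup_left (b := ρs) x).trans (hblocks j x hxj)
end
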